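/- arXiv:1702.06625 — 4 statements merged into one kernel-verified Lean document; each statement's English description precedes it below -/
import Mathlib

section
/- Let d ≥ 1 and let (X_i)_{i≥1} be an i.i.d. sequence of ℤ^d-valued random variables on a probability space (Ω, ℱ, ℙ); set S_0 = 0 and S_n = X_1 + ⋯ + X_n, and assume the walk is recurrent (ℙ(∃ n ≥ 1, S_n = 0) = 1). For p ∈ ℤ^d ∖ {0}, let A_p be the event {∃ n ≥ 1 : S_n = p and S_m ≠ 0 for all 1 ≤ m ≤ n} (the walk visits p before returning to 0). Then ℙ(A_p) = ℙ(A_{−p}) for every p ∈ ℤ^d ∖ {0}. -/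
open MeasureTheory ProbabilityTheory Filter Real
open scoped Topology ENNReal NNReal

private lemma tuple_law {d : ℕ} {Ω : Type*} [MeasurableSpace Ω] (P : Measure Ω)
    (X : ℕ → Ω → (Fin d → ℤ)) (hmeas : ∀ i, Measurable (X i))
    (hindep : iIndepFun X P)
    (hident : ∀ i, IdentDistrib (X i) (X 0) P P)
    (n : ℕ) (g : Fin n → ℕ) (hg : Function.Injective g)
    (D : Set (Fin n → Fin d → ℤ)) :
    P ((fun ω i => X (g i) ω) ⁻¹' D)
      = ∑' y : D, ∏ i, P (X 0 ⁻¹' {(y : Fin n → Fin d → ℤ) i}) := by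
  classical
  have hsing : ∀ y : Fin n → Fin d → ℤ,
      P ((fun ω i => X (g i) ω) ⁻¹' {y}) = ∏ i, P (X 0 ⁻¹' {y i}) := by
    intro y
    set sets : ℕ → Set (Fin d → ℤ) := fun j => ⋂ (i : Fin n) (_ : g i = j), {y i} with hsets
    have h1 : (fun ω i => X (g i) ω) ⁻¹' {y}
        = ⋂ j ∈ Finset.image g Finset.univ, X j ⁻¹' sets j := by
      ext ω
      simp only [Set.mem_preimage, Set.mem_singleton_iff, funext_iff, Set.mem_iInter,
        Finset.mem_image, Finset.mem_univ, true_and, sets, forall_exists_index]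
      constructor
      · rintro h j i rfl i' hii'
        rw [hg hii']; exact h i
      · intro h i
        exact h (g i) i rfl i rfl
    rw [h1, hindep.measure_inter_preimage_eq_mul (Finset.image g Finset.univ)
      (fun j _ => (Set.to_countable _).measurableSet)]
    rw [Finset.prod_image (fun a _ b _ hab => hg hab)]
    apply Finset.prod_congr rfl
    intro i _
    have hgi : sets (g i) = {y i} := by
      ext z
      simp only [sets, Set.mem_iInter, Set.mem_singleton_iff]
      constructor
      · intro h; exact h i rfl
      · rintro rfl i' hi'; rw [hg hi']
    rw [hgi]
    exact (hident (g i)).measure_mem_eq (measurableSet_singleton _)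
  have hsplit : (fun ω i => X (g i) ω) ⁻¹' D
      = ⋃ y : D, (fun ω i => X (g i) ω) ⁻¹' {(y : Fin n → Fin d → ℤ)} := by
    ext ω; simp
  rw [hsplit, measure_iUnion]
  · exact tsum_congr fun y => hsing y
  · intro y y' hyy'
    simp only [Function.onFun]
    apply Set.disjoint_left.mpr
    intro ω h1 h2
    exact hyy' (Subtype.ext (h1.symm.trans h2 : _))
  · intro y
    exact (measurable_pi_lambda _ fun i => hmeas (g i)) (measurableSet_singleton _)

private lemma exch {d : ℕ} {Ω : Type*} [MeasurableSpace Ω] (P : Measure Ω)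
    (X : ℕ → Ω → (Fin d → ℤ)) (hmeas : ∀ i, Measurable (X i))
    (hindep : iIndepFun X P)
    (hident : ∀ i, IdentDistrib (X i) (X 0) P P)
    (n : ℕ) (g₁ g₂ : Fin n → ℕ) (hg₁ : Function.Injective g₁)
    (hg₂ : Function.Injective g₂) (D : Set (Fin n → Fin d → ℤ)) :
    P ((fun ω i => X (g₁ i) ω) ⁻¹' D) = P ((fun ω i => X (g₂ i) ω) ⁻¹' D) := by
  rw [tuple_law P X hmeas hindep hident n g₁ hg₁ D,
    tuple_law P X hmeas hindep hident n g₂ hg₂ D]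

private def Cset {Ω : Type*} {d : ℕ} (S : ℕ → Ω → (Fin d → ℤ)) (n : ℕ)
    (q : Fin d → ℤ) : Set Ω :=
  {ω | S n ω = 0 ∧ ∀ m, 1 ≤ m → m < n → S m ω ≠ 0 ∧ S m ω ≠ q}

private lemma mem_Cset {Ω : Type*} {d : ℕ} {S : ℕ → Ω → (Fin d → ℤ)} {n : ℕ}
    {q : Fin d → ℤ} {ω : Ω} :
    ω ∈ Cset S n q ↔ S n ω = 0 ∧ ∀ m, 1 ≤ m → m < n → S m ω ≠ 0 ∧ S m ω ≠ q :=
  Iff.rfl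

/-- **Symmetry of hitting probabilities of excursions**: for a recurrent random walk
on ℤ^d, the probability that an excursion from `0` hits `p` before returning to `0`
equals the probability that it hits `-p` (explicit random-walk version of part of
Theorem 1.8 of the paper). -/
theorem excursion_hitting_probability_symm
    (d : ℕ) (hd : 1 ≤ d)
    {Ω : Type*} [MeasurableSpace Ω] (P : Measure Ω) [IsProbabilityMeasure P]
    (X : ℕ → Ω → (Fin d → ℤ)) (hmeas : ∀ i, Measurable (X i))
    (hindep : iIndepFun X P)
    (hident : ∀ i, IdentDistrib (X i) (X 0) P P)
    (S : ℕ → Ω → (Fin d → ℤ)) (hS : ∀ n ω, S n ω = ∑ i ∈ Finset.range n, X i ω)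
    (hrec : P {ω | ∃ n, 1 ≤ n ∧ S n ω = 0} = 1)
    (A : (Fin d → ℤ) → Set Ω)
    (hA : ∀ p, A p =
      {ω | ∃ n, 1 ≤ n ∧ S n ω = p ∧ ∀ m, 1 ≤ m → m ≤ n → S m ω ≠ 0})
    (p : Fin d → ℤ) (hp : p ≠ 0) :
    P (A p) = P (A (-p)) := by
  classical
  have h0 : ∀ ω, S 0 ω = 0 := by intro ω; rw [hS]; simp
  -- measurability of S n
  have hSm : ∀ n, Measurable (S n) := by
    intro n
    have : S n = (fun x : Fin n → Fin d → ℤ =>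
        ∑ j ∈ Finset.range n, if h : j < n then x ⟨j, h⟩ else 0)
        ∘ (fun ω i => X i ω) := by
      funext ω
      rw [hS]
      simp only [Function.comp_apply]
      refine Finset.sum_congr rfl fun j hj => ?_
      rw [dif_pos (Finset.mem_range.mp hj)]
    rw [this]
    exact (measurable_of_countable _).comp (measurable_pi_lambda _ fun i => hmeas i)
  have hC_meas : ∀ n q, MeasurableSet (Cset S n q) := by
    intro n q
    have hrw : Cset S n q = (S n) ⁻¹' {0} ∩
        ⋂ (m : ℕ), ⋂ (_ : 1 ≤ m), ⋂ (_ : m < n),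
          ((S m ⁻¹' {0})ᶜ ∩ (S m ⁻¹' {q})ᶜ) := by
      ext ω
      simp only [Cset, Set.mem_setOf_eq, Set.mem_inter_iff, Set.mem_preimage,
        Set.mem_singleton_iff, Set.mem_iInter, Set.mem_compl_iff]
    rw [hrw]
    exact ((hSm n) (measurableSet_singleton 0)).inter
      (MeasurableSet.iInter fun m => MeasurableSet.iInter fun _ =>
        MeasurableSet.iInter fun _ =>
          (((hSm m) (measurableSet_singleton 0)).compl).inter
            (((hSm m) (measurableSet_singleton q)).compl))
  -- time reversal
  have key_rev : ∀ (n : ℕ) (q : Fin d → ℤ), P (Cset S n q) = P (Cset S n (-q)) := by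
    intro n q
    set T : (Fin n → Fin d → ℤ) → ℕ → (Fin d → ℤ) :=
      fun x m => ∑ j ∈ Finset.range m, if h : j < n then x ⟨j, h⟩ else 0 with hT
    set D : (Fin d → ℤ) → Set (Fin n → Fin d → ℤ) :=
      fun r => {x | T x n = 0 ∧ ∀ m, 1 ≤ m → m < n → T x m ≠ 0 ∧ T x m ≠ r} with hD
    have hTS : ∀ ω m, m ≤ n → T (fun i : Fin n => X i ω) m = S m ω := by
      intro ω m hm
      rw [hS, hT]
      refine Finset.sum_congr rfl fun j hj => ?_
      rw [dif_pos (lt_of_lt_of_le (Finset.mem_range.mp hj) hm)]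
    have h1 : Cset S n q = (fun ω (i : Fin n) => X ((i : ℕ)) ω) ⁻¹' D q := by
      ext ω
      simp only [Cset, Set.mem_setOf_eq, Set.mem_preimage, hD]
      constructor
      · rintro ⟨hz, hmid⟩
        refine ⟨by rw [hTS ω n le_rfl]; exact hz, fun m h1m h2m => ?_⟩
        rw [hTS ω m h2m.le]
        exact hmid m h1m h2m
      · rintro ⟨hz, hmid⟩
        rw [hTS ω n le_rfl] at hz
        refine ⟨hz, fun m h1m h2m => ?_⟩
        have hh := hmid m h1m h2m
        rwa [hTS ω m h2m.le] at hh
    have hTrev : ∀ ω m, m ≤ n →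
        T (fun i : Fin n => X (n - 1 - (i : ℕ)) ω) m = S n ω - S (n - m) ω := by
      intro ω m hm
      have e1 : T (fun i : Fin n => X (n - 1 - (i : ℕ)) ω) m
          = ∑ j ∈ Finset.Ico 0 m, X (n - 1 - j) ω := by
        rw [hT]; beta_reduce; rw [Finset.range_eq_Ico]
        refine Finset.sum_congr rfl fun j hj => ?_
        have hj' : j < n := lt_of_lt_of_le (Finset.mem_Ico.mp hj).2 hm
        rw [dif_pos hj']
      rcases Nat.eq_zero_or_pos n with hn | hn
      · subst hn
        have hm0 : m = 0 := Nat.le_zero.mp hm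
        subst hm0
        rw [e1]
        simp
      · have e2 : ∑ j ∈ Finset.Ico 0 m, X (n - 1 - j) ω
            = ∑ j ∈ Finset.Ico (n - m) n, X j ω := by
          have h' := Finset.sum_Ico_reflect (fun j => X j ω) 0
            (show m ≤ (n - 1) + 1 by omega)
          have hrw : n - 1 + 1 = n := by omega
          rw [hrw] at h'
          simpa using h'
        have e3 : ∑ j ∈ Finset.Ico (n - m) n, X j ω = S n ω - S (n - m) ω := by
          rw [hS, hS]
          exact Finset.sum_Ico_eq_sub _ (Nat.sub_le n m)
        rw [e1, e2, e3]
    have h2 : (fun ω (i : Fin n) => X (n - 1 - (i : ℕ)) ω) ⁻¹' D q = Cset S n (-q) := by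
      ext ω
      simp only [Set.mem_preimage, hD, Set.mem_setOf_eq, Cset]
      have hTn : T (fun i : Fin n => X (n - 1 - (i : ℕ)) ω) n = S n ω := by
        rw [hTrev ω n le_rfl, Nat.sub_self, h0, sub_zero]
      constructor
      · rintro ⟨hz, hmid⟩
        rw [hTn] at hz
        refine ⟨hz, fun k h1k h2k => ?_⟩
        have hh := hmid (n - k) (by omega) (by omega)
        rw [hTrev ω (n - k) (by omega), hz] at hh
        have hnk : n - (n - k) = k := by omega
        rw [hnk] at hh
        obtain ⟨ha, hb⟩ := hh
        constructor
        · intro h'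
          exact ha (by rw [h', sub_zero])
        · intro h'
          exact hb (by rw [h', zero_sub, neg_neg])
      · rintro ⟨hz, hmid⟩
        rw [hTn]
        refine ⟨hz, fun m h1m h2m => ?_⟩
        rw [hTrev ω m h2m.le, hz]
        obtain ⟨ha, hb⟩ := hmid (n - m) (by omega) (by omega)
        constructor
        · intro h'
          apply ha
          rw [zero_sub, neg_eq_zero] at h'
          exact h'
        · intro h'
          apply hb
          rw [zero_sub] at h'
          rw [← h', neg_neg]
    calc P (Cset S n q) = P ((fun ω (i : Fin n) => X ((i : ℕ)) ω) ⁻¹' D q) := by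
          rw [h1]
      _ = P ((fun ω (i : Fin n) => X (n - 1 - (i : ℕ)) ω) ⁻¹' D q) :=
          exch P X hmeas hindep hident n _ _ Fin.val_injective
            (fun a b hab => Fin.ext (by have ha := a.isLt; have hb := b.isLt; omega)) (D q)
      _ = P (Cset S n (-q)) := by rw [h2]
  -- covering
  have hcover : ∀ q : Fin d → ℤ,
      {ω | ∃ n, 1 ≤ n ∧ S n ω = 0} ⊆ A q ∪ ⋃ k, Cset S (k+1) q := by
    intro q ω hω
    have hex : ∃ t, 1 ≤ t ∧ S t ω = 0 := hω
    by_cases hhit : ∃ m, (1 ≤ m ∧ m < Nat.find hex) ∧ S m ω = q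
    · left
      rw [hA]
      have hu := Nat.find_spec hhit
      exact ⟨Nat.find hhit, hu.1.1, hu.2, fun m h1m hmu h0m =>
        Nat.find_min hex (lt_of_le_of_lt hmu hu.1.2) ⟨h1m, h0m⟩⟩
    · right
      refine Set.mem_iUnion.mpr ⟨Nat.find hex - 1, ?_⟩
      have ht1 : Nat.find hex - 1 + 1 = Nat.find hex := by
        have h1t := (Nat.find_spec hex).1; omega
      rw [ht1]
      exact ⟨(Nat.find_spec hex).2, fun m h1m h2m =>
        ⟨fun h0m => Nat.find_min hex h2m ⟨h1m, h0m⟩,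
         fun hqm => hhit ⟨m, ⟨h1m, h2m⟩, hqm⟩⟩⟩
  -- disjointness
  have hdisj1 : ∀ q : Fin d → ℤ, q ≠ 0 → ∀ k, Disjoint (A q) (Cset S (k+1) q) := by
    intro q hq k
    rw [Set.disjoint_left]
    intro ω hωA hωC
    rw [hA] at hωA
    obtain ⟨t, ht1, htq, hno0⟩ := hωA
    obtain ⟨hz, hmid⟩ := hωC
    rcases lt_trichotomy t (k+1) with h | h | h
    · exact (hmid t ht1 h).2 htq
    · rw [h] at htq
      exact hq (htq.symm.trans hz)
    · exact hno0 (k+1) (Nat.succ_le_succ (Nat.zero_le k)) h.le hz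
  have hdisjC : ∀ (q : Fin d → ℤ) (a b : ℕ), a < b →
      Disjoint (Cset S (a+1) q) (Cset S (b+1) q) := by
    intro q a b hab
    rw [Set.disjoint_left]
    intro ω h1 h2
    exact (h2.2 (a+1) (Nat.succ_le_succ (Nat.zero_le a)) (by omega)).1 h1.1
  have hpair : ∀ q : Fin d → ℤ,
      Pairwise (Function.onFun Disjoint fun k => Cset S (k+1) q) := by
    intro q k k' hne
    rcases hne.lt_or_gt with h | h
    · exact hdisjC q k k' h
    · exact (hdisjC q k' k h).symm
  -- main counting identity
  have hmain : ∀ q : Fin d → ℤ, q ≠ 0 →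
      P (A q) + ∑' k, P (Cset S (k+1) q) = 1 := by
    intro q hq
    have hU : P (A q ∪ ⋃ k, Cset S (k+1) q)
        = P (A q) + ∑' k, P (Cset S (k+1) q) := by
      rw [measure_union (Set.disjoint_iUnion_right.mpr (hdisj1 q hq))
        (MeasurableSet.iUnion fun k => hC_meas _ _),
        measure_iUnion (hpair q) fun k => hC_meas _ _]
    have hle : (1 : ℝ≥0∞) ≤ P (A q ∪ ⋃ k, Cset S (k+1) q) := by
      rw [← hrec]
      exact measure_mono (hcover q)
    rw [← hU]
    exact le_antisymm prob_le_one hle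
  have hs : ∑' k, P (Cset S (k+1) p) = ∑' k, P (Cset S (k+1) (-p)) :=
    tsum_congr fun k => key_rev (k+1) p
  have h₁ := hmain p hp
  have h₂ := hmain (-p) (neg_ne_zero.mpr hp)
  have hsne : (∑' k, P (Cset S (k+1) p)) ≠ ⊤ :=
    ne_top_of_le_ne_top ENNReal.one_ne_top (le_add_self.trans_eq h₁)
  have hfin : (∑' k, P (Cset S (k+1) p)) + P (A p)
      = (∑' k, P (Cset S (k+1) p)) + P (A (-p)) := by
    rw [add_comm, h₁, hs, add_comm, h₂]
  exact (ENNReal.cancel_of_ne hsne).inj.mp hfin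
end

section
/- Let (A, 𝒜, μ, T) be a probability-preserving dynamical system, G a countable abelian group equipped with its counting measure, and F : A → G measurable. Let T̃(x, q) = (T x, q + F(x)) on A × G, which preserves μ̃ = μ ⊗ (counting measure), and assume the system (A × G, μ̃, T̃) is conservative and ergodic. Set S_0 = 0 and S_n(x) = F(x) + F(Tx) + ⋯ + F(T^{n−1}x), let φ(x) = inf{n ≥ 1 : S_n(x) = 0} (finite μ-a.e.), and for p ∈ G ∖ {0} let N_p(x) = #{1 ≤ k < φ(x) : S_k(x) = p} be the number of visits to the fibre A × {p} during the excursion from A × {0} starting at (x, 0). Then for every p ∈ G ∖ {0}, N_p is μ-integrable and ∫_A N_p dμ = 1. -/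
open MeasureTheory ProbabilityTheory Filter Real
open scoped Topology ENNReal NNReal


set_option linter.unusedSectionVars false

namespace ExcursionAux

variable {Ω : Type*} [MeasurableSpace Ω]

/-- points avoiding `V` at all times in `(0,k)` and landing in `E` at time `k`. -/
def swSet (f : Ω → Ω) (V E : Set Ω) (k : ℕ) : Set Ω :=
  {ω | ∀ i, 0 < i → i < k → f^[i] ω ∉ V} ∩ f^[k] ⁻¹' E

/-- points avoiding `V` at all times in `[0,n)` and landing in `E` at time `n`. -/
def bSet (f : Ω → Ω) (V E : Set Ω) (n : ℕ) : Set Ω :=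
  {ω | ∀ i, i < n → f^[i] ω ∉ V} ∩ f^[n] ⁻¹' E

variable {f : Ω → Ω} {V E : Set Ω}

lemma measurable_avoid (hf : Measurable f) (hV : MeasurableSet V) (P Q : ℕ → Prop) :
    MeasurableSet {ω | ∀ i, P i → Q i → f^[i] ω ∉ V} := by
  have : {ω | ∀ i, P i → Q i → f^[i] ω ∉ V}
      = ⋂ i, ⋂ _h : P i, ⋂ _h : Q i, (f^[i]) ⁻¹' Vᶜ := by
    ext ω; simp [Set.mem_iInter]
  rw [this]
  exact MeasurableSet.iInter fun i => MeasurableSet.iInter fun _ =>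
    MeasurableSet.iInter fun _ => (hf.iterate i) hV.compl

lemma measurable_swSet (hf : Measurable f) (hV : MeasurableSet V) (hE : MeasurableSet E)
    (k : ℕ) : MeasurableSet (swSet f V E k) := by
  unfold swSet
  exact (measurable_avoid hf hV _ _).inter ((hf.iterate k) hE)

lemma measurable_bSet (hf : Measurable f) (hV : MeasurableSet V) (hE : MeasurableSet E)
    (n : ℕ) : MeasurableSet (bSet f V E n) := by
  have : MeasurableSet {ω | ∀ i, i < n → True → f^[i] ω ∉ V} :=
    measurable_avoid hf hV _ _
  have heq : {ω | ∀ i, i < n → True → f^[i] ω ∉ V} = {ω | ∀ i, i < n → f^[i] ω ∉ V} := by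
    ext ω; simp
  rw [heq] at this
  exact this.inter ((hf.iterate n) hE)

lemma preimage_bSet (n : ℕ) :
    f ⁻¹' (bSet f V E n) = (V ∩ swSet f V E (n+1)) ∪ bSet f V E (n+1) := by
  ext ω
  simp only [bSet, swSet, Set.mem_preimage, Set.mem_inter_iff, Set.mem_setOf_eq,
    Set.mem_union]
  constructor
  · rintro ⟨h1, h2⟩
    have h1' : ∀ i, 0 < i → i < n + 1 → f^[i] ω ∉ V := by
      intro i hi hi'
      obtain ⟨j, rfl⟩ : ∃ j, i = j + 1 := ⟨i - 1, by omega⟩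
      rw [Function.iterate_succ_apply]
      exact h1 j (by omega)
    have h2' : f^[n+1] ω ∈ E := by
      rw [Function.iterate_succ_apply]; exact h2
    by_cases hω : ω ∈ V
    · exact Or.inl ⟨hω, h1', h2'⟩
    · refine Or.inr ⟨fun i hi => ?_, h2'⟩
      rcases Nat.eq_zero_or_pos i with rfl | hipos
      · simpa using hω
      · exact h1' i hipos hi
  · rintro (⟨hω, h1, h2⟩ | ⟨h1, h2⟩)
    · constructor
      · intro i hi
        have := h1 (i+1) (by omega) (by omega)
        rwa [Function.iterate_succ_apply] at this
      · rwa [Function.iterate_succ_apply] at h2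
    · constructor
      · intro i hi
        have := h1 (i+1) (by omega)
        rwa [Function.iterate_succ_apply] at this
      · rwa [Function.iterate_succ_apply] at h2

lemma bSet_zero : bSet f V E 0 = E := by
  ext ω; simp [bSet]

variable {ν : Measure Ω}

lemma measure_bSet_step (hpres : MeasurePreserving f ν ν) (hV : MeasurableSet V)
    (hE : MeasurableSet E) (n : ℕ) :
    ν (bSet f V E n) = ν (V ∩ swSet f V E (n+1)) + ν (bSet f V E (n+1)) := by
  have hf := hpres.measurable
  have h1 : ν (bSet f V E n) = ν (f ⁻¹' (bSet f V E n)) :=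
    (hpres.measure_preimage (measurable_bSet hf hV hE n).nullMeasurableSet).symm
  rw [h1, preimage_bSet]
  refine measure_union ?_ (measurable_bSet hf hV hE (n+1))
  refine Set.disjoint_left.2 ?_
  rintro ω ⟨hωV, -⟩ ⟨h1', -⟩
  exact h1' 0 (by omega) (by simpa using hωV)

lemma measure_partial_sum (hpres : MeasurePreserving f ν ν) (hV : MeasurableSet V)
    (hE : MeasurableSet E) (n : ℕ) :
    ν E = (∑ k ∈ Finset.range n, ν (V ∩ swSet f V E (k+1))) + ν (bSet f V E n) := by
  induction n with
  | zero => simp [bSet_zero]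
  | succ n ih =>
      rw [ih, measure_bSet_step hpres hV hE n, Finset.sum_range_succ]
      ring

lemma tsum_swSet_le (hpres : MeasurePreserving f ν ν) (hV : MeasurableSet V)
    (hE : MeasurableSet E) :
    (∑' k : ℕ, ν (V ∩ swSet f V E (k+1))) ≤ ν E := by
  rw [ENNReal.tsum_eq_iSup_nat]
  refine iSup_le fun n => ?_
  rw [measure_partial_sum hpres hV hE n]
  exact le_add_right le_rfl

lemma pairwise_disjoint_swSet (hEV : E ⊆ V) :
    Pairwise fun k k' : ℕ => Disjoint (V ∩ swSet f V E (k+1)) (V ∩ swSet f V E (k'+1)) := by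
  have key : ∀ k k' : ℕ, k < k' →
      Disjoint (V ∩ swSet f V E (k+1)) (V ∩ swSet f V E (k'+1)) := by
    intro k k' hkk'
    refine Set.disjoint_left.2 ?_
    rintro ω ⟨-, havoid, hmem⟩ ⟨-, havoid', -⟩
    exact havoid' (k+1) (by omega) (by omega) (hEV hmem)
  intro k k' hne
  rcases Nat.lt_or_ge k k' with h | h
  · exact key k k' h
  · exact (key k' k (by omega)).symm

lemma iUnion_swSet_self :
    (⋃ k : ℕ, V ∩ swSet f V V (k+1)) = V ∩ {ω | ∃ m : ℕ, f^[m+1] ω ∈ V} := by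
  ext ω
  simp only [Set.mem_iUnion, Set.mem_inter_iff, Set.mem_setOf_eq, swSet, Set.mem_preimage]
  constructor
  · rintro ⟨k, hωV, -, hk⟩
    exact ⟨hωV, k, hk⟩
  · rintro ⟨hωV, hm⟩
    have hne : {m : ℕ | f^[m+1] ω ∈ V}.Nonempty := hm
    set k := sInf {m : ℕ | f^[m+1] ω ∈ V} with hk
    have hkmem : f^[k+1] ω ∈ V := Nat.sInf_mem hne
    refine ⟨k, hωV, ?_, hkmem⟩
    intro i hi hik
    obtain ⟨j, rfl⟩ : ∃ j, i = j + 1 := ⟨i - 1, by omega⟩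
    intro hcon
    exact absurd hkmem (by
      have : j ∈ {m : ℕ | f^[m+1] ω ∈ V} := hcon
      have := Nat.sInf_le this
      omega)

-- split of the k-th sweep set along E / V \ E
lemma measure_swSet_split (hf : Measurable f) (hV : MeasurableSet V) (hE : MeasurableSet E)
    (hEV : E ⊆ V) (k : ℕ) :
    ν (V ∩ swSet f V V k) = ν (V ∩ swSet f V E k) + ν (V ∩ swSet f V (V \ E) k) := by
  have hunion : V ∩ swSet f V V k = (V ∩ swSet f V E k) ∪ (V ∩ swSet f V (V \ E) k) := by
    ext ω
    simp only [swSet, Set.mem_inter_iff, Set.mem_union, Set.mem_setOf_eq, Set.mem_preimage,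
      Set.mem_diff]
    constructor
    · rintro ⟨hωV, havoid, hk⟩
      by_cases hkE : f^[k] ω ∈ E
      · exact Or.inl ⟨hωV, havoid, hkE⟩
      · exact Or.inr ⟨hωV, havoid, hk, hkE⟩
    · rintro (⟨hωV, havoid, hk⟩ | ⟨hωV, havoid, hk, -⟩)
      · exact ⟨hωV, havoid, hEV hk⟩
      · exact ⟨hωV, havoid, hk⟩
  rw [hunion]
  refine measure_union ?_ ?_
  · refine Set.disjoint_left.2 ?_
    rintro ω ⟨-, -, h1⟩ ⟨-, -, h2⟩
    exact h2.2 h1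
  · unfold swSet
    exact hV.inter ((measurable_avoid hf hV _ _).inter ((hf.iterate k) (hV.diff hE)))


lemma measure_inter_returns (hcons : Conservative f ν) (hV : MeasurableSet V) :
    ν (V ∩ {ω | ∃ m : ℕ, f^[m+1] ω ∈ V}) = ν V := by
  have hae : ∀ᵐ ω ∂ν, ω ∈ V → ∃ᶠ n in atTop, f^[n] ω ∈ V :=
    hcons.ae_mem_imp_frequently_image_mem hV.nullMeasurableSet
  have hnull : ν (V \ {ω | ∃ m : ℕ, f^[m+1] ω ∈ V}) = 0 := by
    rw [ae_iff] at hae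
    refine measure_mono_null ?_ hae
    rintro ω ⟨hωV, hnot⟩
    simp only [Set.mem_setOf_eq] at hnot ⊢
    intro h
    obtain ⟨n, hn1, hn2⟩ := ((h hωV).and_eventually (eventually_ge_atTop 1)).exists
    exact hnot ⟨n - 1, by rwa [show n - 1 + 1 = n by omega]⟩
  refine le_antisymm (measure_mono Set.inter_subset_left) ?_
  calc ν V ≤ ν (V ∩ {ω | ∃ m : ℕ, f^[m+1] ω ∈ V})
      + ν (V \ {ω | ∃ m : ℕ, f^[m+1] ω ∈ V}) := measure_le_inter_add_diff _ _ _
    _ = ν (V ∩ {ω | ∃ m : ℕ, f^[m+1] ω ∈ V}) := by rw [hnull, add_zero]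

/-- Key identity: the measure of `E ⊆ V` is swept out by first-return-to-`V` excursions. -/
lemma tsum_swSet_eq (hpres : MeasurePreserving f ν ν) (hcons : Conservative f ν)
    (hV : MeasurableSet V) (hE : MeasurableSet E) (hEV : E ⊆ V) (hVfin : ν V ≠ ∞) :
    (∑' k : ℕ, ν (V ∩ swSet f V E (k+1))) = ν E := by
  have hf := hpres.measurable
  set S1 := ∑' k : ℕ, ν (V ∩ swSet f V E (k+1)) with hS1
  set S2 := ∑' k : ℕ, ν (V ∩ swSet f V (V \ E) (k+1)) with hS2
  have hmeasE : ∀ k, MeasurableSet (V ∩ swSet f V E (k+1)) := fun k =>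
    hV.inter (measurable_swSet hf hV hE (k+1))
  have hmeasVE : ∀ k, MeasurableSet (V ∩ swSet f V (V \ E) (k+1)) := fun k =>
    hV.inter (measurable_swSet hf hV (hV.diff hE) (k+1))
  have hmeasV : ∀ k, MeasurableSet (V ∩ swSet f V V (k+1)) := fun k =>
    hV.inter (measurable_swSet hf hV hV (k+1))
  have hsum : S1 + S2 = ν V := by
    rw [hS1, hS2, ← ENNReal.tsum_add]
    have : ∀ k : ℕ, ν (V ∩ swSet f V E (k+1)) + ν (V ∩ swSet f V (V \ E) (k+1))
        = ν (V ∩ swSet f V V (k+1)) := fun k =>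
      (measure_swSet_split hf hV hE hEV (k+1)).symm
    rw [tsum_congr this,
      ← measure_iUnion (pairwise_disjoint_swSet Set.Subset.rfl) hmeasV,
      iUnion_swSet_self, measure_inter_returns hcons hV]
  have h1 : S1 ≤ ν E := tsum_swSet_le hpres hV hE
  have h2 : S2 ≤ ν (V \ E) := tsum_swSet_le hpres hV (hV.diff hE)
  have hEV' : ν E + ν (V \ E) = ν V := by
    rw [← measure_inter_add_diff V hE, Set.inter_eq_right.mpr hEV]
  have hS2fin : S2 ≠ ∞ := by
    intro h
    rw [h, add_top] at hsum
    exact hVfin hsum.symm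
  have hVEfin : ν (V \ E) ≠ ∞ := by
    intro h
    rw [h, add_top] at hEV'
    exact hVfin hEV'.symm
  refine le_antisymm h1 ?_
  have step1 : ν E = (ν E + ν (V \ E)) - ν (V \ E) :=
    (ENNReal.add_sub_cancel_right hVEfin).symm
  have step2 : (ν E + ν (V \ E)) - ν (V \ E) ≤ (S1 + S2) - S2 := by
    refine tsub_le_tsub ?_ h2
    rw [hsum, hEV']
  have step3 : (S1 + S2) - S2 = S1 := ENNReal.add_sub_cancel_right hS2fin
  rw [step1, ← step3]
  exact step2


lemma swSet_mono {E E' : Set Ω} (h : E ⊆ E') (k : ℕ) : swSet f V E k ⊆ swSet f V E' k :=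
  Set.inter_subset_inter_right _ (Set.preimage_mono h)

/-- `Pseq f C D j` : points of `C` whose next `j` visits to `D` all lie in `C`. -/
def Pseq (f : Ω → Ω) (C D : Set Ω) : ℕ → Set Ω
  | 0 => C
  | j+1 => C ∩ ⋃ k : ℕ, swSet f D (Pseq f C D j) (k+1)

/-- `Qseq f B C D j` : points of `B` whose next `j+1` visits to `D` all lie in `C`. -/
def Qseq (f : Ω → Ω) (B C D : Set Ω) (j : ℕ) : Set Ω :=
  B ∩ ⋃ k : ℕ, swSet f D (Pseq f C D j) (k+1)

variable {B C : Set Ω}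

lemma Pseq_subset (f : Ω → Ω) (C D : Set Ω) (j : ℕ) : Pseq f C D j ⊆ C := by
  cases j with
  | zero => exact Set.Subset.rfl
  | succ j => exact Set.inter_subset_left

lemma measurable_Pseq {D : Set Ω} (hf : Measurable f) (hC : MeasurableSet C)
    (hD : MeasurableSet D) (j : ℕ) : MeasurableSet (Pseq f C D j) := by
  induction j with
  | zero => exact hC
  | succ j ih =>
      exact hC.inter (MeasurableSet.iUnion fun k => measurable_swSet hf hD ih (k+1))

lemma measurable_Qseq {D : Set Ω} (hf : Measurable f) (hB : MeasurableSet B)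
    (hC : MeasurableSet C) (hD : MeasurableSet D) (j : ℕ) :
    MeasurableSet (Qseq f B C D j) :=
  hB.inter (MeasurableSet.iUnion fun k =>
    measurable_swSet hf hD (measurable_Pseq hf hC hD j) (k+1))

lemma Pseq_antitone_succ (f : Ω → Ω) (C D : Set Ω) (j : ℕ) :
    Pseq f C D (j+1) ⊆ Pseq f C D j := by
  induction j with
  | zero => exact Set.inter_subset_left
  | succ j ih =>
      exact Set.inter_subset_inter_right _
        (Set.iUnion_mono fun k => swSet_mono ih (k+1))

lemma Pseq_antitone (f : Ω → Ω) (C D : Set Ω) : Antitone (Pseq f C D) :=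
  antitone_nat_of_succ_le fun j => Pseq_antitone_succ f C D j

lemma measure_Pseq_step (hpres : MeasurePreserving f ν ν) (hcons : Conservative f ν)
    (hB : MeasurableSet B) (hC : MeasurableSet C) (hBC : Disjoint B C)
    (hDfin : ν (B ∪ C) ≠ ∞) (j : ℕ) :
    ν (Pseq f C (B ∪ C) j) = ν (Qseq f B C (B ∪ C) j) + ν (Pseq f C (B ∪ C) (j+1)) := by
  have hf := hpres.measurable
  set D := B ∪ C with hD
  have hDm : MeasurableSet D := hB.union hC
  have hPm : MeasurableSet (Pseq f C D j) := measurable_Pseq hf hC hDm j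
  have hPD : Pseq f C D j ⊆ D := (Pseq_subset f C D j).trans Set.subset_union_right
  have hsweep : (∑' k : ℕ, ν (D ∩ swSet f D (Pseq f C D j) (k+1))) = ν (Pseq f C D j) :=
    tsum_swSet_eq hpres hcons hDm hPm hPD hDfin
  have hunion : ν (⋃ k : ℕ, D ∩ swSet f D (Pseq f C D j) (k+1)) = ν (Pseq f C D j) := by
    rw [measure_iUnion (pairwise_disjoint_swSet hPD)
      (fun k => hDm.inter (measurable_swSet hf hDm hPm (k+1)))]
    exact hsweep
  have hset : (⋃ k : ℕ, D ∩ swSet f D (Pseq f C D j) (k+1))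
      = Qseq f B C D j ∪ Pseq f C D (j+1) := by
    rw [← Set.inter_iUnion]
    rw [hD, Set.union_inter_distrib_right]
    rfl
  rw [← hunion, hset]
  refine measure_union ?_ ?_
  · exact hBC.mono Set.inter_subset_left Set.inter_subset_left
  · exact measurable_Pseq hf hC hDm (j+1)

lemma Pseq_no_hit {D : Set Ω} (hD : D = B ∪ C) (hBC : Disjoint B C) :
    ∀ j m (ω : Ω), f^[m] ω ∈ Pseq f C D j →
      ∀ u, m < u → u ≤ m + j → f^[u] ω ∉ B := by
  intro j
  induction j with
  | zero => intro m ω _ u h1 h2; omega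
  | succ j ih =>
      intro m ω hmem u h1 h2
      obtain ⟨-, hUk⟩ := hmem
      rw [Set.mem_iUnion] at hUk
      obtain ⟨k, havoid, hland⟩ := hUk
      simp only [Set.mem_setOf_eq] at havoid
      rw [Set.mem_preimage, ← Function.iterate_add_apply] at hland
      rcases lt_trichotomy u (m + (k+1)) with hlt | heq | hgt
      · obtain ⟨i, rfl⟩ : ∃ i, u = i + m := ⟨u - m, by omega⟩
        have := havoid i (by omega) (by omega)
        rw [← Function.iterate_add_apply] at this
        intro hB'
        exact this (hD ▸ Set.subset_union_left hB')
      · intro hB'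
        have : f^[u] ω ∈ C := by
          rw [heq, show m + (k+1) = k + 1 + m by omega]
          exact Pseq_subset f C D j hland
        exact (Set.disjoint_left.1 hBC) hB' this
      · exact ih (k + 1 + m) ω hland u (by omega) (by omega)

lemma iInter_Pseq_subset {D : Set Ω} (hD : D = B ∪ C) (hBC : Disjoint B C) :
    (⋂ j : ℕ, Pseq f C D j) ⊆ {ω | ∀ n : ℕ, f^[n+1] ω ∉ B} := by
  intro ω hω n
  have hmem : f^[0] ω ∈ Pseq f C D (n+1) := by
    simpa using Set.mem_iInter.1 hω (n+1)
  exact Pseq_no_hit hD hBC (n+1) 0 ω hmem (n+1) (by omega) (by omega)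

end ExcursionAux

set_option maxHeartbeats 1000000 in
/-- **Expected occupation time of a site during an excursion equals 1** (established in
the paper's proof of Theorem 1.8 via Kac's formula applied to the system induced on
`A × {0, p}`): for a conservative ergodic `G`-extension of a probability-preserving
system, the number `N_p` of visits to the fibre `A × {p}` (`p ≠ 0`) during the
excursion from `A × {0}` is integrable with integral `1`. -/
theorem expected_excursion_occupation_time_eq_one
    {A : Type*} [MeasurableSpace A] (μ : Measure A) [IsProbabilityMeasure μ]
    (T : A → A) (hT : MeasurePreserving T μ μ)
    {G : Type*} [AddCommGroup G] [Countable G] [MeasurableSpace G]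
    [MeasurableSingletonClass G] [DecidableEq G]
    (F : A → G) (hF : Measurable F)
    (Ttil : A × G → A × G) (hTtil : ∀ x q, Ttil (x, q) = (T x, q + F x))
    (hpres : MeasurePreserving Ttil (μ.prod Measure.count) (μ.prod Measure.count))
    (hcons : Conservative Ttil (μ.prod Measure.count))
    (herg : Ergodic Ttil (μ.prod Measure.count))
    (S : ℕ → A → G) (hS : ∀ n x, S n x = ∑ i ∈ Finset.range n, F (T^[i] x))
    (φ : A → ℕ) (hφ : ∀ x, φ x = sInf {n : ℕ | 1 ≤ n ∧ S n x = 0})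
    (N : G → A → ℕ)
    (hN : ∀ p x, N p x = ((Finset.Ico 1 (φ x)).filter (fun k => S k x = p)).card)
    (p : G) (hp : p ≠ 0) :
    Integrable (fun x => (N p x : ℝ)) μ ∧ ∫ x, (N p x : ℝ) ∂μ = 1 := by
  classical
  haveI : SFinite (Measure.count : Measure G) :=
    inferInstanceAs (SFinite (Measure.sum Measure.dirac))
  set ν : Measure (A × G) := μ.prod Measure.count with hνdef
  have hf : Measurable Ttil := hpres.measurable
  set B : Set (A × G) := Set.univ ×ˢ ({0} : Set G) with hBdef
  set C : Set (A × G) := Set.univ ×ˢ ({p} : Set G) with hCdef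
  have hBm : MeasurableSet B := MeasurableSet.univ.prod (measurableSet_singleton _)
  have hCm : MeasurableSet C := MeasurableSet.univ.prod (measurableSet_singleton _)
  have hBC : Disjoint B C := by
    rw [Set.disjoint_left]
    rintro ⟨a, g⟩ hgB hgC
    have h0 : g = 0 := by simpa [hBdef, eq_comm] using hgB
    have h1 : g = p := by simpa [hCdef, eq_comm] using hgC
    exact hp (h1.symm.trans h0)
  have hνB : ν B = 1 := by
    rw [hνdef, hBdef, Measure.prod_prod, measure_univ, Measure.count_singleton, one_mul]
  have hνC : ν C = 1 := by
    rw [hνdef, hCdef, Measure.prod_prod, measure_univ, Measure.count_singleton, one_mul]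
  have hνD : ν (B ∪ C) ≠ ∞ := by
    refine (lt_of_le_of_lt (measure_union_le _ _) ?_).ne
    rw [hνB, hνC]
    norm_num
  -- cocycle facts
  have hS0 : ∀ x, S 0 x = 0 := fun x => by rw [hS]; simp
  have hSsucc : ∀ k x, S (k+1) x = S k x + F (T^[k] x) := fun k x => by
    rw [hS, hS, Finset.sum_range_succ]
  have horb : ∀ (x : A) (k : ℕ), Ttil^[k] (x, 0) = (T^[k] x, S k x) := by
    intro x k
    induction k with
    | zero => simp [hS0]
    | succ k ih =>
        rw [Function.iterate_succ_apply', ih, hTtil, Function.iterate_succ_apply', hSsucc]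
  have hmemB : ∀ (x : A) (k : ℕ), (Ttil^[k] (x, 0) ∈ B ↔ S k x = 0) := by
    intro x k; rw [horb]; simp [hBdef, eq_comm]
  have hmemC : ∀ (x : A) (k : ℕ), (Ttil^[k] (x, 0) ∈ C ↔ S k x = p) := by
    intro x k; rw [horb]; simp [hCdef, eq_comm]
  -- measurability of S, φ, N p
  have hSm : ∀ k, Measurable (fun x => S k x) := by
    intro k
    have heq : (fun x => S k x) = fun x => ∑ i ∈ Finset.range k, F (T^[i] x) :=
      funext fun x => hS k x
    rw [heq]
    exact Finset.measurable_sum _ fun i _ => hF.comp (hT.measurable.iterate i)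
  have hSset : ∀ (k : ℕ) (g : G), MeasurableSet {x | S k x = g} := fun k g =>
    (hSm k) (measurableSet_singleton g)
  have hφ_spec : ∀ x, φ x ≠ 0 →
      1 ≤ φ x ∧ S (φ x) x = 0 ∧ ∀ k, 1 ≤ k → k < φ x → S k x ≠ 0 := by
    intro x hx
    have hne : {n : ℕ | 1 ≤ n ∧ S n x = 0}.Nonempty := by
      by_contra h
      rw [Set.not_nonempty_iff_eq_empty] at h
      rw [hφ, h, Nat.sInf_empty] at hx
      exact hx rfl
    have hmem := Nat.sInf_mem hne
    rw [← hφ] at hmem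
    refine ⟨hmem.1, hmem.2, fun k hk1 hk2 hk0 => ?_⟩
    have : φ x ≤ k := by
      rw [hφ]
      exact Nat.sInf_le ⟨hk1, hk0⟩
    omega
  have hφm : Measurable φ := by
    apply measurable_to_countable'
    intro m
    rcases m with _ | m
    · have heq : φ ⁻¹' {0} = ⋂ n : ℕ, {x | S (n+1) x = 0}ᶜ := by
        ext x
        simp only [Set.mem_preimage, Set.mem_singleton_iff, Set.mem_iInter,
          Set.mem_compl_iff, Set.mem_setOf_eq]
        constructor
        · intro h0 n hn
          have hne : {n : ℕ | 1 ≤ n ∧ S n x = 0}.Nonempty := ⟨n+1, by omega, hn⟩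
          have hmem := Nat.sInf_mem hne
          rw [← hφ] at hmem
          have := hmem.1
          omega
        · intro h
          have hempty : {n : ℕ | 1 ≤ n ∧ S n x = 0} = ∅ := by
            ext n
            simp only [Set.mem_setOf_eq, Set.mem_empty_iff_false, iff_false, not_and]
            intro hn1
            obtain ⟨n', rfl⟩ : ∃ n', n = n' + 1 := ⟨n - 1, by omega⟩
            exact h n'
          rw [hφ, hempty, Nat.sInf_empty]
      rw [heq]
      exact MeasurableSet.iInter fun n => (hSset (n+1) 0).compl
    · have heq : φ ⁻¹' {m+1} = {x | S (m+1) x = 0} ∩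
          ⋂ k : ℕ, ⋂ _h : 1 ≤ k, ⋂ _h' : k < m + 1, {x | S k x = 0}ᶜ := by
        ext x
        simp only [Set.mem_preimage, Set.mem_singleton_iff, Set.mem_inter_iff,
          Set.mem_iInter, Set.mem_compl_iff, Set.mem_setOf_eq]
        constructor
        · intro h
          obtain ⟨h1, h2, h3⟩ := hφ_spec x (by omega)
          rw [h] at h2 h3
          exact ⟨h2, fun k hk1 hk2 => h3 k hk1 hk2⟩
        · rintro ⟨h1, h2⟩
          have hne : {n : ℕ | 1 ≤ n ∧ S n x = 0}.Nonempty := ⟨m+1, by omega, h1⟩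
          have hmem := Nat.sInf_mem hne
          rw [← hφ] at hmem
          have hle : φ x ≤ m + 1 := by
            rw [hφ]
            exact Nat.sInf_le ⟨by omega, h1⟩
          by_contra hne'
          exact h2 (φ x) hmem.1 (by omega) hmem.2
      rw [heq]
      exact (hSset (m+1) 0).inter (MeasurableSet.iInter fun k =>
        MeasurableSet.iInter fun _ => MeasurableSet.iInter fun _ => (hSset k 0).compl)
  have hNm : Measurable (N p) := by
    apply measurable_to_countable'
    intro c
    have heq : (N p) ⁻¹' {c} = ⋃ m : ℕ, (φ ⁻¹' {m}) ∩
        {x | ((Finset.Ico 1 m).filter (fun k => S k x = p)).card = c} := by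
      ext x
      simp only [Set.mem_preimage, Set.mem_singleton_iff, Set.mem_iUnion, Set.mem_inter_iff,
        Set.mem_setOf_eq]
      constructor
      · intro h
        exact ⟨φ x, rfl, by rw [← hN]; exact h⟩
      · rintro ⟨m, hm, hc⟩
        rw [hN, hm]
        exact hc
    rw [heq]
    refine MeasurableSet.iUnion fun m => (hφm (measurableSet_singleton m)).inter ?_
    have hcard : Measurable fun x => ((Finset.Ico 1 m).filter (fun k => S k x = p)).card := by
      have heq2 : (fun x => ((Finset.Ico 1 m).filter (fun k => S k x = p)).card)
          = fun x => ∑ k ∈ Finset.Ico 1 m, if S k x = p then 1 else 0 := by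
        funext x
        rw [Finset.card_filter]
      rw [heq2]
      exact Finset.measurable_sum _ fun k _ =>
        Measurable.ite (hSset k p) measurable_const measurable_const
    exact hcard (measurableSet_singleton c)
  -- the set of points whose orbit returns to B, and its a.e.-invariance
  set U : Set (A × G) := ⋃ n : ℕ, (Ttil^[n+1]) ⁻¹' B with hUdef
  have hUm : MeasurableSet U := MeasurableSet.iUnion fun n => (hf.iterate (n+1)) hBm
  have hBU0 : ν (B \ U) = 0 := by
    have hae : ∀ᵐ ω ∂ν, ω ∈ B → ∃ᶠ n in Filter.atTop, Ttil^[n] ω ∈ B :=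
      hcons.ae_mem_imp_frequently_image_mem hBm.nullMeasurableSet
    rw [MeasureTheory.ae_iff] at hae
    refine measure_mono_null ?_ hae
    rintro ω ⟨hωB, hωU⟩
    simp only [Set.mem_setOf_eq]
    intro himp
    obtain ⟨n, hn, hn1⟩ :=
      ((himp hωB).and_eventually (Filter.eventually_ge_atTop 1)).exists
    refine hωU ?_
    rw [hUdef, Set.mem_iUnion]
    exact ⟨n - 1, by rw [Set.mem_preimage, show n - 1 + 1 = n by omega]; exact hn⟩
  have hUinv : Ttil ⁻¹' U ⊆ U := by
    intro ω hω
    rw [Set.mem_preimage, hUdef, Set.mem_iUnion] at hω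
    obtain ⟨n, hn⟩ := hω
    rw [Set.mem_preimage] at hn
    rw [hUdef, Set.mem_iUnion]
    refine ⟨n + 1, ?_⟩
    rw [Set.mem_preimage, Function.iterate_succ_apply]
    exact hn
  have hUae : Ttil ⁻¹' U =ᵐ[ν] U := by
    rw [MeasureTheory.ae_eq_set]
    constructor
    · rw [Set.diff_eq_empty.2 hUinv]
      exact measure_empty
    · have hsub : U \ Ttil ⁻¹' U ⊆ Ttil ⁻¹' (B \ U) := by
        rintro ω ⟨hωU, hωnot⟩
        rw [hUdef, Set.mem_iUnion] at hωU
        obtain ⟨n, hn⟩ := hωU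
        rw [Set.mem_preimage] at hn
        rw [Set.mem_preimage, Set.mem_diff]
        have hTωU : Ttil ω ∉ U := fun hc => hωnot (Set.mem_preimage.2 hc)
        rcases n with _ | n'
        · exact ⟨by simpa using hn, hTωU⟩
        · exfalso
          refine hTωU ?_
          rw [hUdef, Set.mem_iUnion]
          refine ⟨n', ?_⟩
          rw [Set.mem_preimage, ← Function.iterate_succ_apply]
          exact hn
      refine measure_mono_null hsub ?_
      rw [hpres.measure_preimage (hBm.diff hUm).nullMeasurableSet]
      exact hBU0
  have hUc : ν Uᶜ = 0 := by
    rcases herg.quasiErgodic.ae_empty_or_univ₀ hUm.nullMeasurableSet hUae with h | h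
    · exfalso
      have hU0 : ν U = 0 := MeasureTheory.ae_eq_empty.mp h
      have h1 : ν B ≤ ν (B ∩ U) + ν (B \ U) := measure_le_inter_add_diff ν B U
      have h2 : ν (B ∩ U) = 0 := measure_mono_null Set.inter_subset_right hU0
      rw [hνB, h2, hBU0, add_zero] at h1
      exact absurd h1 (by simp)
    · exact MeasureTheory.ae_eq_univ.mp h
  -- fibre computation
  have hfib : ∀ X : Set (A × G), μ {x | (x, 0) ∈ X} = ν (X ∩ B) := by
    intro X
    have hsec : X ∩ B = {x | (x, 0) ∈ X} ×ˢ ({0} : Set G) := by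
      ext ⟨a, g⟩
      simp only [hBdef, Set.mem_inter_iff, Set.mem_prod, Set.mem_univ, true_and,
        Set.mem_singleton_iff, Set.mem_setOf_eq]
      constructor
      · rintro ⟨hX, rfl⟩
        exact ⟨hX, rfl⟩
      · rintro ⟨hX, rfl⟩
        exact ⟨hX, rfl⟩
    rw [hsec, hνdef, Measure.prod_prod, Measure.count_singleton, mul_one]
  -- the excursion sets
  set P : ℕ → Set (A × G) := ExcursionAux.Pseq Ttil C (B ∪ C) with hPdef
  set Q : ℕ → Set (A × G) := ExcursionAux.Qseq Ttil B C (B ∪ C) with hQdef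
  have hDm : MeasurableSet (B ∪ C) := hBm.union hCm
  have hP0 : P 0 = C := rfl
  have hPsucc : ∀ j, P (j+1)
      = C ∩ ⋃ k : ℕ, ExcursionAux.swSet Ttil (B ∪ C) (P j) (k+1) := fun j => rfl
  have hQeq : ∀ j, Q j
      = B ∩ ⋃ k : ℕ, ExcursionAux.swSet Ttil (B ∪ C) (P j) (k+1) := fun j => rfl
  have hPm : ∀ j, MeasurableSet (P j) := fun j =>
    ExcursionAux.measurable_Pseq hf hCm hDm j
  have hrec : ∀ j, ν (P j) = ν (Q j) + ν (P (j+1)) := fun j =>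
    ExcursionAux.measure_Pseq_step hpres hcons hBm hCm hBC hνD j
  -- partial sums and the limit
  have hPsub : ∀ j, P j ⊆ C := fun j => ExcursionAux.Pseq_subset Ttil C (B ∪ C) j
  have hpart : ∀ n, ν C = (∑ j ∈ Finset.range n, ν (Q j)) + ν (P n) := by
    intro n
    induction n with
    | zero => simp [hP0]
    | succ n ih =>
        rw [ih, hrec n, Finset.sum_range_succ]
        ring
  have hPlim : Filter.Tendsto (fun n => ν (P n)) Filter.atTop (nhds 0) := by
    have h0 : ν (⋂ j, P j) = 0 := by
      refine measure_mono_null ?_ hUc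
      refine (ExcursionAux.iInter_Pseq_subset rfl hBC).trans ?_
      intro ω hω
      rw [Set.mem_compl_iff, hUdef, Set.mem_iUnion]
      rintro ⟨n, hn⟩
      exact hω n hn
    have htnd := MeasureTheory.tendsto_measure_iInter_atTop (μ := ν)
      (fun j => (hPm j).nullMeasurableSet)
      (ExcursionAux.Pseq_antitone Ttil C (B ∪ C))
      ⟨0, by rw [show ν (P 0) = 1 from hP0 ▸ hνC]; exact ENNReal.one_ne_top⟩
    rw [h0] at htnd
    exact htnd
  have hQsum : (∑' j : ℕ, ν (Q j)) = 1 := by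
    have h1 : Filter.Tendsto (fun n => ∑ j ∈ Finset.range n, ν (Q j)) Filter.atTop
        (nhds (∑' j : ℕ, ν (Q j))) := ENNReal.tendsto_nat_tsum _
    have heq : ∀ n, (∑ j ∈ Finset.range n, ν (Q j)) = 1 - ν (P n) := by
      intro n
      refine ENNReal.eq_sub_of_add_eq ?_ ?_
      · exact ne_top_of_le_ne_top (by rw [hνC]; exact ENNReal.one_ne_top)
          (measure_mono (hPsub n))
      · exact ((hpart n).symm.trans hνC)
    have h2 : Filter.Tendsto (fun n => ∑ j ∈ Finset.range n, ν (Q j)) Filter.atTop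
        (nhds 1) := by
      simp only [heq]
      have hc : Filter.Tendsto (fun n => (1 : ℝ≥0∞) - ν (P n)) Filter.atTop
          (nhds (1 - 0)) :=
        ((ENNReal.continuous_sub_left ENNReal.one_ne_top).tendsto 0).comp hPlim
      rw [tsub_zero] at hc
      exact hc
    exact tendsto_nhds_unique h1 h2
  -- membership in D along the orbit
  have hmemD : ∀ (x : A) (k : ℕ),
      (Ttil^[k] (x, 0) ∈ B ∪ C ↔ (S k x = 0 ∨ S k x = p)) := by
    intro x k
    rw [Set.mem_union, hmemB, hmemC]
  -- counting lemma: membership in `P j` forces j+1 many visits to `p` with no zeros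
  have hVisCount : ∀ (j m : ℕ) (x : A), Ttil^[m] (x, 0) ∈ P j →
      S m x = p ∧ ∃ e, m ≤ e ∧ (∀ u, m < u → u ≤ e → S u x ≠ 0) ∧
        j + 1 ≤ ((Finset.Icc m e).filter (fun k => S k x = p)).card := by
    intro j
    induction j with
    | zero =>
        intro m x hmem
        have hsm : S m x = p := (hmemC x m).1 (hP0 ▸ hmem)
        refine ⟨hsm, m, le_rfl, fun u h1 h2 => by omega, ?_⟩
        simp [Finset.Icc_self, Finset.filter_singleton, hsm]
    | succ j ih =>
        intro m x hmem
        rw [hPsucc j] at hmem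
        obtain ⟨hCmem, hU'⟩ := hmem
        rw [Set.mem_iUnion] at hU'
        obtain ⟨k, havoid, hland⟩ := hU'
        simp only [Set.mem_setOf_eq] at havoid
        rw [Set.mem_preimage, ← Function.iterate_add_apply] at hland
        have hsm : S m x = p := (hmemC x m).1 hCmem
        obtain ⟨hsm', e, he1, he2, he3⟩ := ih (k + 1 + m) x hland
        refine ⟨hsm, e, by omega, ?_, ?_⟩
        · intro u hu1 hu2
          rcases lt_trichotomy u (k + 1 + m) with hlt | heq | hgt
          · obtain ⟨i, rfl⟩ : ∃ i, u = i + m := ⟨u - m, by omega⟩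
            have hnD := havoid i (by omega) (by omega)
            rw [← Function.iterate_add_apply] at hnD
            intro h0
            exact hnD ((hmemD x (i + m)).2 (Or.inl h0))
          · rw [heq, hsm']
            exact hp
          · exact he2 u (by omega) hu2
        · have hsub : insert m ((Finset.Icc (k+1+m) e).filter (fun k' => S k' x = p))
              ⊆ (Finset.Icc m e).filter (fun k' => S k' x = p) := by
            intro u hu
            rcases Finset.mem_insert.1 hu with rfl | hu'
            · exact Finset.mem_filter.2 ⟨Finset.mem_Icc.2 ⟨le_rfl, by omega⟩, hsm⟩
            · obtain ⟨hu1, hu2⟩ := Finset.mem_filter.1 hu'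
              obtain ⟨hu3, hu4⟩ := Finset.mem_Icc.1 hu1
              exact Finset.mem_filter.2 ⟨Finset.mem_Icc.2 ⟨by omega, hu4⟩, hu2⟩
          have hnotmem : m ∉ (Finset.Icc (k+1+m) e).filter (fun k' => S k' x = p) := by
            intro hin
            have := (Finset.mem_Icc.1 (Finset.mem_filter.1 hin).1).1
            omega
          have hcard := Finset.card_le_card hsub
          rw [Finset.card_insert_of_notMem hnotmem] at hcard
          omega
  -- membership in `Q j` forces at least j+1 visits before the return time
  have hQtoN : ∀ (j : ℕ) (x : A), (x, 0) ∈ Q j → φ x ≠ 0 → j + 1 ≤ N p x := by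
    intro j x hmem hret
    rw [hQeq j] at hmem
    obtain ⟨-, hU'⟩ := hmem
    rw [Set.mem_iUnion] at hU'
    obtain ⟨k, havoid, hland⟩ := hU'
    simp only [Set.mem_setOf_eq] at havoid
    rw [Set.mem_preimage] at hland
    obtain ⟨hsm, e, he1, he2, he3⟩ := hVisCount j (k+1) x hland
    obtain ⟨hφ1, hφ2, hφ3⟩ := hφ_spec x hret
    have hφe : e < φ x := by
      by_contra hcon
      push_neg at hcon
      rcases lt_trichotomy (φ x) (k+1) with hlt | heq | hgt
      · have hnD := havoid (φ x) (by omega) (by omega)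
        exact hnD ((hmemD x (φ x)).2 (Or.inl hφ2))
      · rw [← heq] at hsm
        exact hp (hsm.symm.trans hφ2)
      · exact he2 (φ x) (by omega) (by omega) hφ2
    have hsub : (Finset.Icc (k+1) e).filter (fun k' => S k' x = p)
        ⊆ (Finset.Ico 1 (φ x)).filter (fun k' => S k' x = p) := by
      intro u hu
      obtain ⟨hu1, hu2⟩ := Finset.mem_filter.1 hu
      obtain ⟨hu3, hu4⟩ := Finset.mem_Icc.1 hu1
      exact Finset.mem_filter.2 ⟨Finset.mem_Ico.2 ⟨by omega, by omega⟩, hu2⟩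
    rw [hN]
    exact le_trans he3 (Finset.card_le_card hsub)
  -- conversely, j+1 visits produce membership in `Q j`
  have hNtoQ : ∀ (j : ℕ) (x : A), j + 1 ≤ N p x → (x, 0) ∈ Q j := by
    intro j x hNx
    set Wx := (Finset.Ico 1 (φ x)).filter (fun k => S k x = p) with hWx
    have hWcard : j + 1 ≤ Wx.card := by rw [hN] at hNx; exact hNx
    have hφ0 : φ x ≠ 0 := by
      intro h0
      have hWempty : Wx = ∅ := by
        rw [hWx, h0]
        simp
      rw [hWempty] at hWcard
      simp at hWcard
    obtain ⟨hφ1, hφ2, hφ3⟩ := hφ_spec x hφ0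
    have hWmem : ∀ u, u ∈ Wx ↔ (1 ≤ u ∧ u < φ x ∧ S u x = p) := by
      intro u
      rw [hWx, Finset.mem_filter, Finset.mem_Ico]
      tauto
    have key : ∀ (d m : ℕ), m ∈ Wx → d + 1 ≤ (Wx.filter (fun u => m ≤ u)).card →
        Ttil^[m] (x, 0) ∈ P d := by
      intro d
      induction d with
      | zero =>
          intro m hm _
          rw [hP0]
          exact (hmemC x m).2 ((hWmem m).1 hm).2.2
      | succ d ih =>
          intro m hm hcard
          have hmWx := (hWmem m).1 hm
          set W' := Wx.filter (fun u => m < u) with hW'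
          have hsplit : Wx.filter (fun u => m ≤ u) = insert m W' := by
            ext u
            simp only [hW', Finset.mem_filter, Finset.mem_insert]
            constructor
            · rintro ⟨h1, h2⟩
              rcases h2.eq_or_lt with heq | hlt
              · exact Or.inl heq.symm
              · exact Or.inr ⟨h1, hlt⟩
            · rintro (rfl | ⟨h1, h2⟩)
              · exact ⟨hm, le_rfl⟩
              · exact ⟨h1, le_of_lt h2⟩
          have hmnot : m ∉ W' := by simp [hW']
          have hcard' : d + 1 ≤ W'.card := by
            rw [hsplit, Finset.card_insert_of_notMem hmnot] at hcard
            omega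
          have hW'ne : W'.Nonempty := Finset.card_pos.1 (by omega)
          set m' := W'.min' hW'ne with hm'
          have hm'W : m' ∈ W' := Finset.min'_mem _ _
          have hm'min : ∀ u ∈ W', m' ≤ u := fun u hu => Finset.min'_le _ _ hu
          have hm'Wx : m' ∈ Wx := (Finset.mem_filter.1 hm'W).1
          have hmm' : m < m' := (Finset.mem_filter.1 hm'W).2
          have hm'mem := (hWmem m').1 hm'Wx
          have hWeq : Wx.filter (fun u => m' ≤ u) = W' := by
            ext u
            simp only [hW', Finset.mem_filter]
            constructor
            · rintro ⟨h1, h2⟩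
              exact ⟨h1, by omega⟩
            · rintro ⟨h1, h2⟩
              exact ⟨h1, hm'min u (Finset.mem_filter.2 ⟨h1, h2⟩)⟩
          have hPd : Ttil^[m'] (x, 0) ∈ P d := ih m' hm'Wx (by rw [hWeq]; exact hcard')
          rw [hPsucc d]
          refine ⟨(hmemC x m).2 hmWx.2.2, ?_⟩
          rw [Set.mem_iUnion]
          refine ⟨m' - m - 1, ?_, ?_⟩
          · intro i hi1 hi2
            rw [← Function.iterate_add_apply]
            have hu1 : m < i + m := by omega
            have hu2 : i + m < m' := by omega
            intro hD'
            rcases (hmemD x (i + m)).1 hD' with h0 | hppp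
            · exact hφ3 (i + m) (by omega) (by omega) h0
            · have hiW : i + m ∈ Wx := (hWmem (i+m)).2 ⟨by omega, by omega, hppp⟩
              have hiW' : i + m ∈ W' := Finset.mem_filter.2 ⟨hiW, hu1⟩
              have := hm'min (i + m) hiW'
              omega
          · rw [Set.mem_preimage, ← Function.iterate_add_apply,
              show m' - m - 1 + 1 + m = m' by omega]
            exact hPd
    have hWne : Wx.Nonempty := Finset.card_pos.1 (by omega)
    set m0 := Wx.min' hWne with hm0
    have hm0W : m0 ∈ Wx := Finset.min'_mem _ _
    have hm0mem := (hWmem m0).1 hm0W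
    have hfilter0 : Wx.filter (fun u => m0 ≤ u) = Wx := by
      ext u
      simp only [Finset.mem_filter, and_iff_left_iff_imp]
      intro hu
      exact Finset.min'_le _ _ hu
    have hPj : Ttil^[m0] (x, 0) ∈ P j := key j m0 hm0W (by rw [hfilter0]; exact hWcard)
    rw [hQeq j]
    refine ⟨?_, ?_⟩
    · have := (hmemB x 0).2 (hS0 x)
      simpa using this
    · rw [Set.mem_iUnion]
      refine ⟨m0 - 1, ?_, ?_⟩
      · intro i hi1 hi2
        intro hD'
        rcases (hmemD x i).1 hD' with h0 | hppp
        · exact hφ3 i (by omega) (by omega) h0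
        · have hiW : i ∈ Wx := (hWmem i).2 ⟨by omega, by omega, hppp⟩
          have := Finset.min'_le _ _ hiW
          omega
      · rw [Set.mem_preimage, show m0 - 1 + 1 = m0 by omega]
        exact hPj
  -- measure of level sets of N p
  have hQμ : ∀ j : ℕ, μ {x | j < N p x} = ν (Q j) := by
    intro j
    have hQB : Q j ⊆ B := Set.inter_subset_left
    have h1 : μ {x | (x, 0) ∈ Q j} = ν (Q j) := by
      rw [hfib (Q j), Set.inter_eq_left.2 hQB]
    have haeU : ∀ᵐ x ∂μ, (x, 0) ∈ U := by
      rw [MeasureTheory.ae_iff]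
      rw [show {x | ¬(x, 0) ∈ U} = {x | (x, 0) ∈ Uᶜ} from rfl, hfib Uᶜ]
      exact measure_mono_null Set.inter_subset_left hUc
    have hae : {x | j < N p x} =ᵐ[μ] {x | (x, 0) ∈ Q j} := by
      rw [Filter.eventuallyEq_set]
      filter_upwards [haeU] with x hxU
      constructor
      · intro hj
        exact hNtoQ j x (by omega)
      · intro hQx
        have hφ0 : φ x ≠ 0 := by
          rw [hUdef, Set.mem_iUnion] at hxU
          obtain ⟨n, hn⟩ := hxU
          rw [Set.mem_preimage] at hn
          have h0 : S (n+1) x = 0 := (hmemB x (n+1)).1 hn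
          intro hc
          have hne : {n' : ℕ | 1 ≤ n' ∧ S n' x = 0}.Nonempty := ⟨n+1, by omega, h0⟩
          have hmem := Nat.sInf_mem hne
          rw [← hφ] at hmem
          have := hmem.1
          omega
        have := hQtoN j x hQx hφ0
        omega
    rw [measure_congr hae, h1]
  -- layer-cake for the Lebesgue integral
  have hlevelm : ∀ j : ℕ, MeasurableSet {x | j < N p x} := fun j =>
    hNm measurableSet_Ioi
  have hlint : (∫⁻ x, (N p x : ℝ≥0∞) ∂μ) = ∑' j : ℕ, μ {x | j < N p x} := by
    have hpt : ∀ x, (N p x : ℝ≥0∞)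
        = ∑' j : ℕ, Set.indicator {x' | j < N p x'} (fun _ => 1) x := by
      intro x
      have h1 : ∀ j : ℕ, Set.indicator {x' | j < N p x'} (fun _ => (1:ℝ≥0∞)) x
          = if j < N p x then 1 else 0 := fun j => Set.indicator_apply _ _ _
      rw [tsum_congr h1]
      rw [tsum_eq_sum (s := Finset.range (N p x))
        (fun j hj => if_neg (by simpa using hj))]
      rw [Finset.sum_congr rfl fun j hj => if_pos (Finset.mem_range.1 hj)]
      simp
    rw [lintegral_congr hpt]
    have h2 := lintegral_tsum (μ := μ)
      (f := fun (j : ℕ) (x' : A) => Set.indicator {x'' | j < N p x''} (fun _ => (1:ℝ≥0∞)) x')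
      (fun j => (measurable_one.indicator (hlevelm j)).aemeasurable)
    exact h2.trans (tsum_congr fun j => lintegral_indicator_one (hlevelm j))
  have hlint1 : (∫⁻ x, (N p x : ℝ≥0∞) ∂μ) = 1 := by
    rw [hlint, tsum_congr fun j => hQμ j, hQsum]
  -- conclusion
  have haesm : AEStronglyMeasurable (fun x => (N p x : ℝ)) μ :=
    (measurable_from_top.comp hNm).aestronglyMeasurable
  constructor
  · refine ⟨haesm, ?_⟩
    show (∫⁻ a, ((‖(N p a : ℝ)‖₊ : ℝ≥0∞)) ∂μ) < ∞
    have heq : (∫⁻ a, ((‖(N p a : ℝ)‖₊ : ℝ≥0∞)) ∂μ) = ∫⁻ a, (N p a : ℝ≥0∞) ∂μ := by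
      refine lintegral_congr fun x => ?_
      rw [← enorm_eq_nnnorm, Real.enorm_eq_ofReal (by positivity), ENNReal.ofReal_natCast]
    rw [heq, hlint1]
    exact ENNReal.one_lt_top
  · rw [MeasureTheory.integral_eq_lintegral_of_nonneg_ae
      (Filter.Eventually.of_forall fun x => by positivity) haesm]
    have heq : (∫⁻ a, ENNReal.ofReal ((N p a : ℝ)) ∂μ) = 1 := by
      rw [← hlint1]
      exact lintegral_congr fun x => ENNReal.ofReal_natCast _
    rw [heq, ENNReal.toReal_one]
end

section
/- Let (A, 𝒜, μ, T) be a probability-preserving dynamical system, G an infinite countable abelian group equipped with its counting measure, and F : A → G measurable. Let T̃(x, q) = (T x, q + F(x)) on A × G, which preserves μ̃ = μ ⊗ (counting measure), and assume the system (A × G, μ̃, T̃) is conservative and ergodic. For p ∈ G ∖ {0}, let A_p = {x ∈ A : ∃ n ≥ 1, S_n(x) = p and S_m(x) ≠ 0 for all 1 ≤ m ≤ n}, where S_n(x) = F(x) + F(Tx) + ⋯ + F(T^{n−1}x). Then μ(A_p) → 0 as p → ∞ along the cofinite filter on G; that is, for every ε > 0 the set {p ∈ G ∖ {0} : μ(A_p)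 ≥ ε} is finite. -/
open MeasureTheory ProbabilityTheory Filter Real
open scoped Topology ENNReal NNReal

/-- **The probability that an excursion hits a faraway site tends to zero**
(unnumbered lemma of Section 3.4 of the paper): for a conservative ergodic
`G`-extension of a probability-preserving system, `μ(A_p) → 0` as `p → ∞`
along the cofinite filter on `G`. -/
theorem excursion_hitting_probability_tendsto_zero
    {A : Type*} [MeasurableSpace A] (μ : Measure A) [IsProbabilityMeasure μ]
    (T : A → A) (hT : MeasurePreserving T μ μ)
    {G : Type*} [AddCommGroup G] [Countable G] [Infinite G] [MeasurableSpace G]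
    [MeasurableSingletonClass G]
    (F : A → G) (hF : Measurable F)
    (Ttil : A × G → A × G) (hTtil : ∀ x q, Ttil (x, q) = (T x, q + F x))
    (hpres : MeasurePreserving Ttil (μ.prod Measure.count) (μ.prod Measure.count))
    (hcons : Conservative Ttil (μ.prod Measure.count))
    (herg : Ergodic Ttil (μ.prod Measure.count))
    (S : ℕ → A → G) (hS : ∀ n x, S n x = ∑ i ∈ Finset.range n, F (T^[i] x))
    (Ap : G → Set A)
    (hAp : ∀ p, Ap p =
      {x | ∃ n, 1 ≤ n ∧ S n x = p ∧ ∀ m, 1 ≤ m → m ≤ n → S m x ≠ 0}) :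
    Tendsto (fun p : G => μ (Ap p)) cofinite (𝓝 0) := by
  classical
  have hTm := hT.measurable
  have hSm : ∀ n, Measurable (S n) := by
    intro n
    have h1 : S n = fun x => ∑ i ∈ Finset.range n, F (T^[i] x) := funext fun x => hS n x
    rw [h1]
    exact Finset.measurable_sum _ fun i _ => hF.comp (hTm.iterate i)
  have hApm : ∀ p, MeasurableSet (Ap p) := by
    intro p
    rw [hAp p]
    have h1 : {x | ∃ n, 1 ≤ n ∧ S n x = p ∧ ∀ m, 1 ≤ m → m ≤ n → S m x ≠ 0}
        = ⋃ n, ⋃ (_ : 1 ≤ n),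
            ({x | S n x = p} ∩ ⋂ m, ⋂ (_ : 1 ≤ m), ⋂ (_ : m ≤ n), {x | S m x ≠ 0}) := by
      ext x
      simp only [Set.mem_setOf_eq, Set.mem_iUnion, Set.mem_inter_iff, Set.mem_iInter]
      tauto
    rw [h1]
    refine MeasurableSet.iUnion fun n => MeasurableSet.iUnion fun _ => ?_
    refine ((hSm n) (measurableSet_singleton p)).inter ?_
    exact MeasurableSet.iInter fun m => MeasurableSet.iInter fun _ =>
      MeasurableSet.iInter fun _ => ((hSm m) (measurableSet_singleton (0 : G))).compl
  -- the iterates of the skew product on the zero fibre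
  have hiter : ∀ n x, Ttil^[n] (x, (0 : G)) = (T^[n] x, S n x) := by
    intro n x
    induction n with
    | zero => simp [hS]
    | succ n ih =>
      rw [Function.iterate_succ_apply', ih, hTtil, Function.iterate_succ_apply']
      refine Prod.ext rfl ?_
      simp only [hS, Finset.sum_range_succ]
  -- almost every point returns to the zero fibre
  set R : Set A := {x | ∃ n, 1 ≤ n ∧ S n x = 0} with hRdef
  have hRm : MeasurableSet R := by
    have h1 : R = ⋃ n, ⋃ (_ : 1 ≤ n), {x | S n x = 0} := by
      ext x
      simp only [hRdef, Set.mem_setOf_eq, Set.mem_iUnion]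
      tauto
    rw [h1]
    exact MeasurableSet.iUnion fun n => MeasurableSet.iUnion fun _ =>
      (hSm n) (measurableSet_singleton (0 : G))
  have hsf : SFinite (Measure.count : Measure G) := by
    rw [show (Measure.count : Measure G) = Measure.sum Measure.dirac from rfl]
    exact sfinite_sum_of_countable _
  have hRc : μ Rᶜ = 0 := by
    have hs : MeasurableSet ((Set.univ : Set A) ×ˢ ({0} : Set G)) :=
      MeasurableSet.univ.prod (measurableSet_singleton 0)
    have h := hcons.ae_mem_imp_frequently_image_mem hs.nullMeasurableSet
    rw [ae_iff] at h
    have hsub : Rᶜ ×ˢ ({0} : Set G) ⊆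
        {z | ¬ (z ∈ (Set.univ : Set A) ×ˢ ({0} : Set G) →
          ∃ᶠ n in atTop, Ttil^[n] z ∈ (Set.univ : Set A) ×ˢ ({0} : Set G))} := by
      rintro ⟨x, q⟩ ⟨hx, hq⟩
      simp only [Set.mem_singleton_iff] at hq
      subst hq
      intro hcontra
      have hfreq := hcontra (by simp)
      obtain ⟨n, hn1, hmem⟩ := (frequently_atTop.mp hfreq) 1
      rw [hiter n x] at hmem
      exact hx ⟨n, hn1, hmem.2⟩
    have hle : μ Rᶜ * Measure.count ({0} : Set G) ≤ 0 := by
      rw [← Measure.prod_prod]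
      exact le_trans (measure_mono hsub) (le_of_eq h)
    simpa [Measure.count_singleton] using hle
  -- every returning point lies in only finitely many `Ap p`
  have hfin : ∀ x ∈ R, {p : G | x ∈ Ap p}.Finite := by
    intro x hx
    obtain ⟨n₀, hn₀, hS0⟩ := hx
    apply Set.Finite.subset ((Set.finite_Iio n₀).image fun n => S n x)
    intro p hp
    simp only [Set.mem_setOf_eq] at hp
    rw [hAp] at hp
    simp only [Set.mem_setOf_eq] at hp
    obtain ⟨n, hn1, hSp, hne⟩ := hp
    have hlt : n < n₀ := by
      by_contra hcon
      exact hne n₀ hn₀ (le_of_not_gt hcon) hS0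
    exact ⟨n, hlt, hSp⟩
  -- main argument
  rw [ENNReal.tendsto_nhds_zero]
  intro ε hε
  rw [eventually_cofinite]
  by_contra hKfin
  have hK : Set.Infinite {p : G | ¬ μ (Ap p) ≤ ε} := hKfin
  set e := Set.Infinite.natEmbedding _ hK with he
  set p : ℕ → G := fun k => (e k : G) with hp
  have hpinj : Function.Injective p := fun a b hab =>
    e.injective (Subtype.coe_injective hab)
  have hεle : ∀ k, ε ≤ μ (Ap (p k)) := fun k => le_of_lt (not_le.mp (e k).2)
  set U : ℕ → Set A := fun N => ⋃ k, Ap (p (N + k)) with hU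
  have hUm : ∀ N, MeasurableSet (U N) := fun N => MeasurableSet.iUnion fun _ => hApm _
  have hanti : Antitone U := by
    intro N N' hNN' x hx
    obtain ⟨k, hk⟩ := Set.mem_iUnion.mp hx
    exact Set.mem_iUnion.mpr ⟨N' - N + k, by rwa [show N + (N' - N + k) = N' + k by omega]⟩
  have hL : ε ≤ μ (⋂ N, U N) := by
    rw [Directed.measure_iInter (fun N => (hUm N).nullMeasurableSet) hanti.directed_ge
      ⟨0, measure_ne_top μ _⟩]
    refine le_iInf fun N => le_trans (hεle N) (measure_mono ?_)
    simpa using Set.subset_iUnion (fun k => Ap (p (N + k))) 0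
  have hLR : (⋂ N, U N) ⊆ Rᶜ := by
    intro x hx hxR
    have hfx := hfin x hxR
    have hM : ∀ N, ∃ k, N ≤ k ∧ x ∈ Ap (p k) := by
      intro N
      obtain ⟨k, hk⟩ := Set.mem_iUnion.mp (Set.mem_iInter.mp hx N)
      exact ⟨N + k, Nat.le_add_right N k, hk⟩
    have hMinf : Set.Infinite {k : ℕ | x ∈ Ap (p k)} := by
      apply Set.infinite_of_not_bddAbove
      rintro ⟨b, hb⟩
      obtain ⟨k, hkb, hk⟩ := hM (b + 1)
      exact absurd (hb hk) (by omega)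
    have himg : Set.Infinite {q : G | x ∈ Ap q} := by
      refine Set.Infinite.mono ?_ (hMinf.image (hpinj.injOn))
      rintro q ⟨k, hk, rfl⟩
      exact hk
    exact himg hfx
  have hcontr : ε ≤ 0 := hL.trans (le_of_le_of_eq (measure_mono hLR) hRc)
  exact hε.not_ge hcontr
end

section
/- For every real number γ ∈ [0, 1], the series ∑_{m=1}^{∞} (Γ(1 + mγ/2) / (m! · Γ(1+γ)^{m/2}))^{1/(2m)} diverges to +∞ (equivalently, the sequence of its nonnegative terms is not summable). -/
open Filter Real
open scoped Topology

private lemma exp_neg_one_le_Gamma {x : ℝ} (hx : 0 ≤ x) :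
    Real.exp (-1) ≤ Real.Gamma (1 + x) := by
  have h0 : (0:ℝ) < 1 + x := by linarith
  rw [Real.Gamma_eq_integral h0]
  have hint : MeasureTheory.IntegrableOn
      (fun t : ℝ => Real.exp (-t) * t ^ (1 + x - 1)) (Set.Ioi 0) :=
    Real.GammaIntegral_convergent h0
  have hsub : Set.Ioi (1:ℝ) ⊆ Set.Ioi 0 := Set.Ioi_subset_Ioi zero_le_one
  have hint1 : MeasureTheory.IntegrableOn
      (fun t : ℝ => Real.exp (-t) * t ^ (1 + x - 1)) (Set.Ioi 1) :=
    hint.mono_set hsub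
  have hexpint : MeasureTheory.IntegrableOn (fun t : ℝ => Real.exp (-t)) (Set.Ioi 1) := by
    have := exp_neg_integrableOn_Ioi (1:ℝ) (zero_lt_one)
    simpa using this
  have step1 : Real.exp (-1) = ∫ t in Set.Ioi (1:ℝ), Real.exp (-t) :=
    (integral_exp_neg_Ioi 1).symm
  have step2 : (∫ t in Set.Ioi (1:ℝ), Real.exp (-t)) ≤
      ∫ t in Set.Ioi (1:ℝ), Real.exp (-t) * t ^ (1 + x - 1) := by
    refine MeasureTheory.setIntegral_mono_on hexpint hint1 measurableSet_Ioi ?_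
    intro t ht
    have ht1 : (1:ℝ) ≤ t := le_of_lt ht
    have : (1:ℝ) ≤ t ^ (1 + x - 1) := by
      have : (1:ℝ) = t ^ (0:ℝ) := by rw [Real.rpow_zero]
      rw [this]
      exact Real.rpow_le_rpow_of_exponent_le ht1 (by linarith)
    nlinarith [Real.exp_pos (-t), this]
  have step3 : (∫ t in Set.Ioi (1:ℝ), Real.exp (-t) * t ^ (1 + x - 1)) ≤
      ∫ t in Set.Ioi (0:ℝ), Real.exp (-t) * t ^ (1 + x - 1) := by
    refine MeasureTheory.setIntegral_mono_set hint ?_ (Filter.Eventually.of_forall hsub)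
    filter_upwards [MeasureTheory.ae_restrict_mem measurableSet_Ioi] with t ht
    have ht0 : 0 < t := ht
    positivity
  linarith [step1, step2, step3]

private lemma Gamma_one_add_le_one {γ : ℝ} (h0 : 0 ≤ γ) (h1 : γ ≤ 1) :
    Real.Gamma (1 + γ) ≤ 1 := by
  have hconv := Real.convexOn_Gamma
  have := hconv.2 (by norm_num : (1:ℝ) ∈ Set.Ioi (0:ℝ))
    (by norm_num : (2:ℝ) ∈ Set.Ioi (0:ℝ)) (by linarith : 0 ≤ 1 - γ) h0 (by ring)
  have h2 : Real.Gamma 2 = 1 := by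
    have := Real.Gamma_nat_eq_factorial 1
    norm_num at this
    convert this using 2
    norm_num
  simp only [smul_eq_mul] at this
  have heq : (1 - γ) * 1 + γ * 2 = 1 + γ := by ring
  rw [heq, Real.Gamma_one, h2] at this
  linarith

/-- **Carleman's condition for the MLGM(γ) distribution** (verified in the paper's
proof of Theorem 1.1): for `γ ∈ [0,1]`, the series
`∑_{m≥1} (Γ(1 + mγ/2)/(m! Γ(1+γ)^{m/2}))^{1/(2m)}` diverges to `+∞`. -/
theorem carleman_series_diverges (γ : ℝ) (hγ : γ ∈ Set.Icc (0 : ℝ) 1) :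
    Tendsto (fun N : ℕ => ∑ m ∈ Finset.Icc 1 N,
        (Real.Gamma (1 + (m : ℝ) * γ / 2) /
            ((m.factorial : ℝ) * Real.Gamma (1 + γ) ^ ((m : ℝ) / 2)))
          ^ (1 / (2 * (m : ℝ))))
      atTop atTop := by
  obtain ⟨hγ0, hγ1⟩ := hγ
  -- lower bound for each term
  have key : ∀ m : ℕ, 1 ≤ m →
      Real.exp (-1) * (1 / (m : ℝ)) ≤
      (Real.Gamma (1 + (m : ℝ) * γ / 2) /
          ((m.factorial : ℝ) * Real.Gamma (1 + γ) ^ ((m : ℝ) / 2)))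
        ^ (1 / (2 * (m : ℝ))) := by
    intro m hm
    have hm0 : (0:ℝ) < m := by exact_mod_cast hm
    set A := Real.Gamma (1 + (m : ℝ) * γ / 2) with hA_def
    set D := (m.factorial : ℝ) * Real.Gamma (1 + γ) ^ ((m : ℝ) / 2) with hD_def
    have hGpos : 0 < Real.Gamma (1 + γ) := Real.Gamma_pos_of_pos (by linarith)
    have hA : Real.exp (-1) ≤ A :=
      exp_neg_one_le_Gamma (by positivity)
    have hA0 : 0 ≤ A := le_trans (Real.exp_pos _).le hA
    have hD0 : 0 < D := by
      have := Real.rpow_pos_of_pos hGpos ((m : ℝ) / 2)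
      have hf : (0:ℝ) < m.factorial := by exact_mod_cast m.factorial_pos
      positivity
    have hDle : D ≤ (m : ℝ) ^ m := by
      have h1 : (m.factorial : ℝ) ≤ (m : ℝ) ^ m := by
        exact_mod_cast m.factorial_le_pow
      have h2 : Real.Gamma (1 + γ) ^ ((m : ℝ) / 2) ≤ 1 :=
        Real.rpow_le_one hGpos.le (Gamma_one_add_le_one hγ0 hγ1) (by positivity)
      calc D ≤ (m.factorial : ℝ) * 1 := by
              exact mul_le_mul_of_nonneg_left h2 (by positivity)
        _ = (m.factorial : ℝ) := by ring
        _ ≤ (m : ℝ) ^ m := h1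
    have hdiv : Real.exp (-1) / (m : ℝ) ^ m ≤ A / D :=
      div_le_div₀ hA0 hA hD0 hDle
    have hexp_nonneg : (0:ℝ) ≤ 1 / (2 * (m : ℝ)) := by positivity
    have hrpow : (Real.exp (-1) / (m : ℝ) ^ m) ^ (1 / (2 * (m : ℝ))) ≤
        (A / D) ^ (1 / (2 * (m : ℝ))) :=
      Real.rpow_le_rpow (by positivity) hdiv hexp_nonneg
    refine le_trans ?_ hrpow
    rw [Real.div_rpow (Real.exp_pos _).le (by positivity)]
    have hb1 : Real.exp (-1) ≤ Real.exp (-1) ^ (1 / (2 * (m : ℝ))) := by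
      have h := Real.rpow_le_rpow_of_exponent_ge (Real.exp_pos (-1))
        (by rw [Real.exp_le_one_iff]; norm_num) (show 1 / (2 * (m : ℝ)) ≤ 1 by
          rw [div_le_one (by positivity)]
          have hm1 : (1:ℝ) ≤ (m : ℝ) := by exact_mod_cast hm
          linarith)
      rwa [Real.rpow_one] at h
    have hb2 : (((m : ℝ) ^ m) : ℝ) ^ (1 / (2 * (m : ℝ))) ≤ (m : ℝ) := by
      have hcast : ((m : ℝ) ^ m) = (m : ℝ) ^ ((m : ℕ) : ℝ) := by
        rw [Real.rpow_natCast]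
      rw [hcast, ← Real.rpow_mul (by positivity)]
      have hmul : ((m : ℕ) : ℝ) * (1 / (2 * (m : ℝ))) = 1 / 2 := by
        field_simp
      rw [hmul]
      have hm1 : (1:ℝ) ≤ (m : ℝ) := by exact_mod_cast hm
      calc (m : ℝ) ^ ((1:ℝ)/2) ≤ (m : ℝ) ^ (1:ℝ) :=
            Real.rpow_le_rpow_of_exponent_le hm1 (by norm_num)
        _ = (m : ℝ) := Real.rpow_one _
    have hden_pos : (0:ℝ) < (((m : ℝ) ^ m) : ℝ) ^ (1 / (2 * (m : ℝ))) :=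
      Real.rpow_pos_of_pos (by positivity) _
    calc Real.exp (-1) * (1 / (m : ℝ)) = Real.exp (-1) / (m : ℝ) := by ring
      _ ≤ Real.exp (-1) ^ (1 / (2 * (m : ℝ))) / (((m : ℝ) ^ m) : ℝ) ^ (1 / (2 * (m : ℝ))) :=
          div_le_div₀ (by positivity) hb1 hden_pos hb2
  -- compare with the harmonic series
  have hharm : Tendsto (fun N : ℕ => ∑ m ∈ Finset.Icc 1 N,
      Real.exp (-1) * (1 / (m : ℝ))) atTop atTop := by
    have heq : ∀ N : ℕ, ∑ m ∈ Finset.Icc 1 N, Real.exp (-1) * (1 / (m : ℝ)) =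
        Real.exp (-1) * ∑ i ∈ Finset.range N, 1 / ((i : ℝ) + 1) := by
      intro N
      rw [Finset.mul_sum]
      rw [show Finset.Icc 1 N = Finset.Ico 1 (N + 1) by rfl]
      rw [Finset.sum_Ico_eq_sum_range]
      simp only [Nat.add_sub_cancel]
      refine Finset.sum_congr rfl fun i _ => ?_
      push_cast
      ring_nf
    simp only [heq]
    exact (tendsto_const_mul_atTop_of_pos (Real.exp_pos (-1))).mpr
      Real.tendsto_sum_range_one_div_nat_succ_atTop
  refine tendsto_atTop_mono ?_ hharm
  intro N
  refine Finset.sum_le_sum fun m hm => ?_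
  exact key m (Finset.mem_Icc.mp hm).1
end
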